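/- Let U ⊆ ℂ be open, β ≠ 0 a real constant, ξ : U → ℂ² smooth and nowhere zero, and e : U → ℂ, η̄ : U → ℂ smooth with e nowhere zero, satisfying ∂̄ξ = ½ η̄ ξ + i β ē ⟨ξ,ξ⟩ σ₂ ξ̄ and ∂̄e + η̄ e = 0 on U. Let X : U → ℝ³ be a smooth map with ∂X = e·v(ξ). Then: (i) ∂X·∂X = 0; (ii) ∂X·∂̄X = 2|e|²⟨ξ,ξ⟩² > 0 (so X is a regular conformal immersion); (iii) n_ξ·∂X = 0 and |n_ξ| = 1 (so n_ξ is a unit normal of X); and (iv) ∂̄∂X = β·(∂X·∂̄X)·n_ξ, i.e. X has constant mean curvature β. -/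

import Mathlib

open Complex

noncomputable section

/-- Wirtinger derivative `∂f = ½(∂ₓf − i ∂_yf)`. -/
def wirt {E : Type*} [NormedAddCommGroup E] [NormedSpace ℂ E] (f : ℂ → E) (z : ℂ) : E :=
  (2 : ℂ)⁻¹ • (fderiv ℝ f z 1 - Complex.I • fderiv ℝ f z Complex.I)

/-- Conjugate Wirtinger derivative `∂̄f = ½(∂ₓf + i ∂_yf)`. -/
def wirtb {E : Type*} [NormedAddCommGroup E] [NormedSpace ℂ E] (f : ℂ → E) (z : ℂ) : E :=
  (2 : ℂ)⁻¹ • (fderiv ℝ f z 1 + Complex.I • fderiv ℝ f z Complex.I)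

/-- Complex-bilinear dot product on ℂ³. -/
def cdot3 (a b : Fin 3 → ℂ) : ℂ := ∑ i, a i * b i

/-- Embedding ℝ³ ↪ ℂ³. -/
def toC3 (v : Fin 3 → ℝ) : Fin 3 → ℂ := fun i => (v i : ℂ)

/-- Euclidean norm on ℝ³. -/
def rnorm3 (v : Fin 3 → ℝ) : ℝ := Real.sqrt (∑ i, v i ^ 2)

/-- The null vector `v(ξ) = (ξ₀²−ξ₁², i(ξ₀²+ξ₁²), −2ξ₀ξ₁)` associated to a spinor. -/
def spinV (ξ : Fin 2 → ℂ) : Fin 3 → ℂ :=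
  ![ξ 0 ^ 2 - ξ 1 ^ 2, Complex.I * (ξ 0 ^ 2 + ξ 1 ^ 2), -2 * ξ 0 * ξ 1]

/-- The spinor norm `⟨ξ,ξ⟩ = |ξ₀|² + |ξ₁|²`. -/
def spinSq (ξ : Fin 2 → ℂ) : ℝ := Complex.normSq (ξ 0) + Complex.normSq (ξ 1)

/-- The vector `n_ξ = (2 Re(ξ̄₀ξ₁), 2 Im(ξ̄₀ξ₁), |ξ₀|²−|ξ₁|²)/⟨ξ,ξ⟩`. -/
def spinN (ξ : Fin 2 → ℂ) : Fin 3 → ℝ :=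
  (spinSq ξ)⁻¹ •
    ![2 * ((starRingEnd ℂ) (ξ 0) * ξ 1).re, 2 * ((starRingEnd ℂ) (ξ 0) * ξ 1).im,
      Complex.normSq (ξ 0) - Complex.normSq (ξ 1)]

/-- The second Pauli matrix. -/
def sigma2 : Matrix (Fin 2) (Fin 2) ℂ := !![0, -Complex.I; Complex.I, 0]

/-- The Gross–Neveu Euler–Lagrange equation `∂̄ξ = ½ ηb ξ + iβ ē ⟨ξ,ξ⟩ σ₂ ξ̄`. -/
def grossNeveuEq (β : ℝ) (ξ : ℂ → Fin 2 → ℂ) (e ηb : ℂ → ℂ) (z : ℂ) : Prop :=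
  wirtb ξ z = ((2 : ℂ)⁻¹ * ηb z) • ξ z +
    (Complex.I * (β : ℂ) * (starRingEnd ℂ) (e z) * (spinSq (ξ z) : ℂ)) •
      sigma2.mulVec (fun A => (starRingEnd ℂ) (ξ z A))

/- ## Auxiliary lemmas -/

lemma wirtb_congr {E : Type*} [NormedAddCommGroup E] [NormedSpace ℂ E]
    {f g : ℂ → E} {z : ℂ} (h : f =ᶠ[nhds z] g) : wirtb f z = wirtb g z := by
  rw [wirtb, wirtb, h.fderiv_eq]

lemma wirt_apply' {n : ℕ} (f : ℂ → Fin n → ℂ) (z : ℂ) (hf : DifferentiableAt ℝ f z)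
    (A : Fin n) : wirt f z A = wirt (fun w => f w A) z := by
  have h : fderiv ℝ (fun w => f w A) z =
      (ContinuousLinearMap.proj (R := ℝ) (φ := fun _ : Fin n => ℂ) A).comp (fderiv ℝ f z) :=
    (((ContinuousLinearMap.proj (R := ℝ) (φ := fun _ : Fin n => ℂ) A).hasFDerivAt).comp z
      hf.hasFDerivAt).fderiv
  simp [wirt, h, Pi.smul_apply, smul_eq_mul, mul_sub]

lemma wirtb_apply' {n : ℕ} (f : ℂ → Fin n → ℂ) (z : ℂ) (hf : DifferentiableAt ℝ f z)
    (A : Fin n) : wirtb f z A = wirtb (fun w => f w A) z := by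
  have h : fderiv ℝ (fun w => f w A) z =
      (ContinuousLinearMap.proj (R := ℝ) (φ := fun _ : Fin n => ℂ) A).comp (fderiv ℝ f z) :=
    (((ContinuousLinearMap.proj (R := ℝ) (φ := fun _ : Fin n => ℂ) A).hasFDerivAt).comp z
      hf.hasFDerivAt).fderiv
  simp [wirtb, h, Pi.smul_apply, smul_eq_mul, mul_add]

lemma wirtb_mul (f g : ℂ → ℂ) (z : ℂ) (hf : DifferentiableAt ℝ f z)
    (hg : DifferentiableAt ℝ g z) :
    wirtb (fun w => f w * g w) z = f z * wirtb g z + g z * wirtb f z := by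
  rw [wirtb, wirtb, wirtb, fderiv_fun_mul hf hg]
  simp [smul_eq_mul]; ring

lemma wirtb_const {E : Type*} [NormedAddCommGroup E] [NormedSpace ℂ E] (c : E) (z : ℂ) :
    wirtb (fun _ => c) z = 0 := by
  simp [wirtb, fderiv_const]

lemma wirtb_const_mul (c : ℂ) (g : ℂ → ℂ) (z : ℂ) (hg : DifferentiableAt ℝ g z) :
    wirtb (fun w => c * g w) z = c * wirtb g z := by
  rw [wirtb_mul _ _ _ (differentiableAt_const c) hg, wirtb_const]
  ring

lemma wirtb_add (f g : ℂ → ℂ) (z : ℂ) (hf : DifferentiableAt ℝ f z)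
    (hg : DifferentiableAt ℝ g z) :
    wirtb (fun w => f w + g w) z = wirtb f z + wirtb g z := by
  rw [wirtb, wirtb, wirtb, fderiv_fun_add hf hg]
  simp [smul_eq_mul]; ring

lemma wirtb_sub (f g : ℂ → ℂ) (z : ℂ) (hf : DifferentiableAt ℝ f z)
    (hg : DifferentiableAt ℝ g z) :
    wirtb (fun w => f w - g w) z = wirtb f z - wirtb g z := by
  rw [wirtb, wirtb, wirtb, fderiv_fun_sub hf hg]
  simp [smul_eq_mul]; ring

lemma wirtb_emul2 (e f g : ℂ → ℂ) (z : ℂ) (he : DifferentiableAt ℝ e z)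
    (hf : DifferentiableAt ℝ f z) (hg : DifferentiableAt ℝ g z) :
    wirtb (fun w => e w * (f w * g w)) z =
      e z * (f z * wirtb g z + g z * wirtb f z) + f z * g z * wirtb e z := by
  rw [wirtb_mul e (fun w => f w * g w) z he (hf.mul hg), wirtb_mul f g z hf hg]

lemma wirtb_ofReal (f : ℂ → ℝ) (z : ℂ) (hf : DifferentiableAt ℝ f z) :
    wirtb (fun w => (f w : ℂ)) z = (starRingEnd ℂ) (wirt (fun w => (f w : ℂ)) z) := by
  have h : fderiv ℝ (fun w => (f w : ℂ)) z = Complex.ofRealCLM.comp (fderiv ℝ f z) :=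
    (Complex.ofRealCLM.hasFDerivAt.comp z hf.hasFDerivAt).fderiv
  rw [wirtb, wirt, h]
  simp only [smul_eq_mul, ContinuousLinearMap.comp_apply, ofRealCLM_apply, map_mul, map_add,
    map_sub, map_inv₀, map_ofNat, Complex.conj_ofReal, Complex.conj_I]
  ring

/-- solutions of the Gross–Neveu model with vanishing torsion
`∂̄e + η̄e = 0` give rise to conformal immersions of constant mean curvature `β`. -/
theorem gross_neveu_gives_cmc_immersion
    (U : Set ℂ) (hU : IsOpen U) (β : ℝ) (hβ : β ≠ 0)
    (ξ : ℂ → Fin 2 → ℂ) (hξ : ContDiffOn ℝ (⊤ : ℕ∞) ξ U) (hξne : ∀ z ∈ U, ξ z ≠ 0)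
    (e ηb : ℂ → ℂ) (he : ContDiffOn ℝ (⊤ : ℕ∞) e U) (hη : ContDiffOn ℝ (⊤ : ℕ∞) ηb U)
    (hene : ∀ z ∈ U, e z ≠ 0)
    (heq : ∀ z ∈ U, grossNeveuEq β ξ e ηb z)
    (htor : ∀ z ∈ U, wirtb e z + ηb z * e z = 0)
    (X : ℂ → Fin 3 → ℝ) (hX : ContDiffOn ℝ (⊤ : ℕ∞) X U)
    (hdX : ∀ z ∈ U, wirt (fun w => toC3 (X w)) z = e z • spinV (ξ z)) :
    ∀ z ∈ U,
      -- (i) conformality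
      cdot3 (wirt (fun w => toC3 (X w)) z) (wirt (fun w => toC3 (X w)) z) = 0 ∧
      -- (ii) regularity
      (cdot3 (wirt (fun w => toC3 (X w)) z) (wirtb (fun w => toC3 (X w)) z) =
          ((2 * Complex.normSq (e z) * spinSq (ξ z) ^ 2 : ℝ) : ℂ) ∧
        0 < 2 * Complex.normSq (e z) * spinSq (ξ z) ^ 2) ∧
      -- (iii) `n_ξ` is a unit normal of `X`
      (cdot3 (toC3 (spinN (ξ z))) (wirt (fun w => toC3 (X w)) z) = 0 ∧
        rnorm3 (spinN (ξ z)) = 1) ∧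
      -- (iv) constant mean curvature `β`
      wirtb (fun w => wirt (fun u => toC3 (X u)) w) z =
        ((β : ℂ) *
          cdot3 (wirt (fun w => toC3 (X w)) z) (wirtb (fun w => toC3 (X w)) z)) •
        toC3 (spinN (ξ z)) := by
  intro z hz
  have hmem : U ∈ nhds z := hU.mem_nhds hz
  have hed : DifferentiableAt ℝ e z := (he.contDiffAt hmem).differentiableAt (by simp)
  have hξd : DifferentiableAt ℝ ξ z := (hξ.contDiffAt hmem).differentiableAt (by simp)
  have hXd : DifferentiableAt ℝ X z := (hX.contDiffAt hmem).differentiableAt (by simp)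
  have hx0 : DifferentiableAt ℝ (fun w => ξ w 0) z := (differentiableAt_pi.1 hξd) 0
  have hx1 : DifferentiableAt ℝ (fun w => ξ w 1) z := (differentiableAt_pi.1 hξd) 1
  have hXC : DifferentiableAt ℝ (fun w => toC3 (X w)) z := by
    apply differentiableAt_pi.2
    intro A
    exact Complex.ofRealCLM.differentiableAt.comp z ((differentiableAt_pi.1 hXd) A)
  set x0 := ξ z 0 with hx0def
  set x1 := ξ z 1 with hx1def
  set E := e z with hEdef
  set H := ηb z with hHdef
  -- positivity of spinSq
  have hsx : x0 ≠ 0 ∨ x1 ≠ 0 := by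
    by_contra h
    push_neg at h
    exact hξne z hz (funext fun i => by fin_cases i <;> simp only [Pi.zero_apply] <;>
      [exact h.1; exact h.2])
  have hs : 0 < spinSq (ξ z) := by
    rw [spinSq]
    rcases hsx with h | h
    · nlinarith [Complex.normSq_pos.2 h, Complex.normSq_nonneg x1]
    · nlinarith [Complex.normSq_pos.2 h, Complex.normSq_nonneg x0]
  have hsnC : ((spinSq (ξ z) : ℝ) : ℂ) ≠ 0 := by
    exact_mod_cast hs.ne'
  have hsC : ((spinSq (ξ z) : ℝ) : ℂ) = (starRingEnd ℂ) x0 * x0 + (starRingEnd ℂ) x1 * x1 := by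
    rw [spinSq]
    push_cast
    rw [Complex.normSq_eq_conj_mul_self, Complex.normSq_eq_conj_mul_self]
  -- derivative of X in terms of e, ξ
  have hW : wirt (fun w => toC3 (X w)) z = e z • spinV (ξ z) := hdX z hz
  have hWb : wirtb (fun w => toC3 (X w)) z =
      fun A => (starRingEnd ℂ) (e z * spinV (ξ z) A) := by
    funext A
    rw [wirtb_apply' _ _ hXC A]
    have h1 : (fun w => toC3 (X w) A) = fun w => ((X w A : ℝ) : ℂ) := rfl
    rw [h1, wirtb_ofReal _ _ ((differentiableAt_pi.1 hXd) A)]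
    congr 1
    have h2 : (fun w => ((X w A : ℝ) : ℂ)) = fun w => toC3 (X w) A := rfl
    rw [h2, ← wirt_apply' _ _ hXC A, hW]
    simp
  -- (i)
  have hi : cdot3 (wirt (fun w => toC3 (X w)) z) (wirt (fun w => toC3 (X w)) z) = 0 := by
    rw [hW]
    simp only [cdot3, Fin.sum_univ_three, Pi.smul_apply, smul_eq_mul, spinV,
      Matrix.cons_val_zero, Matrix.cons_val_one, Matrix.head_cons, Matrix.cons_val_two,
      Matrix.tail_cons]
    linear_combination (E ^ 2 * (x0 ^ 2 + x1 ^ 2) ^ 2) * Complex.I_sq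
  -- (ii)
  have hii : cdot3 (wirt (fun w => toC3 (X w)) z) (wirtb (fun w => toC3 (X w)) z) =
      ((2 * Complex.normSq (e z) * spinSq (ξ z) ^ 2 : ℝ) : ℂ) := by
    rw [hW, hWb]
    simp only [cdot3, Fin.sum_univ_three, Pi.smul_apply, smul_eq_mul, spinV,
      Matrix.cons_val_zero, Matrix.cons_val_one, Matrix.head_cons, Matrix.cons_val_two,
      Matrix.tail_cons, map_mul, map_sub, map_add, map_pow, map_neg, map_ofNat,
      Complex.conj_I]
    push_cast
    rw [Complex.normSq_eq_conj_mul_self, hsC]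
    linear_combination (-(E * (starRingEnd ℂ) E * (x0 ^ 2 + x1 ^ 2) *
      ((starRingEnd ℂ) x0 ^ 2 + (starRingEnd ℂ) x1 ^ 2))) * Complex.I_sq
  have hpos : 0 < 2 * Complex.normSq (e z) * spinSq (ξ z) ^ 2 := by
    have h1 : 0 < Complex.normSq (e z) := Complex.normSq_pos.2 (hene z hz)
    positivity
  -- key identities for spinN
  have hr0 : spinN (ξ z) 0 * spinSq (ξ z) = 2 * ((starRingEnd ℂ) x0 * x1).re := by
    simp only [spinN, Pi.smul_apply, smul_eq_mul, Matrix.cons_val_zero]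
    field_simp
    rfl
  have hr1 : spinN (ξ z) 1 * spinSq (ξ z) = 2 * ((starRingEnd ℂ) x0 * x1).im := by
    simp only [spinN, Pi.smul_apply, smul_eq_mul, Matrix.cons_val_one, Matrix.head_cons]
    field_simp
    rfl
  have hr2 : spinN (ξ z) 2 * spinSq (ξ z) = Complex.normSq x0 - Complex.normSq x1 := by
    simp only [spinN, Pi.smul_apply, smul_eq_mul, Matrix.cons_val_two, Matrix.tail_cons,
      Matrix.head_cons]
    field_simp
    rfl
  have hN0s : ((spinN (ξ z) 0 : ℝ) : ℂ) * ((spinSq (ξ z) : ℝ) : ℂ) =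
      (starRingEnd ℂ) x0 * x1 + x0 * (starRingEnd ℂ) x1 := by
    rw [← Complex.ofReal_mul, hr0]
    have h := Complex.add_conj ((starRingEnd ℂ) x0 * x1)
    simp only [map_mul, Complex.conj_conj] at h
    push_cast at h ⊢
    linear_combination -h
  have hN1s : ((spinN (ξ z) 1 : ℝ) : ℂ) * ((spinSq (ξ z) : ℝ) : ℂ) =
      -Complex.I * ((starRingEnd ℂ) x0 * x1 - x0 * (starRingEnd ℂ) x1) := by
    rw [← Complex.ofReal_mul, hr1]
    have h := Complex.sub_conj ((starRingEnd ℂ) x0 * x1)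
    simp only [map_mul, Complex.conj_conj] at h
    push_cast at h ⊢
    linear_combination Complex.I * h +
      (2 * (((starRingEnd ℂ) x0 * x1).im : ℂ)) * Complex.I_sq
  have hN2s : ((spinN (ξ z) 2 : ℝ) : ℂ) * ((spinSq (ξ z) : ℝ) : ℂ) =
      (starRingEnd ℂ) x0 * x0 - (starRingEnd ℂ) x1 * x1 := by
    rw [← Complex.ofReal_mul, hr2]
    push_cast
    rw [Complex.normSq_eq_conj_mul_self, Complex.normSq_eq_conj_mul_self]
  -- (iii) first part
  have hiii1 : cdot3 (toC3 (spinN (ξ z))) (wirt (fun w => toC3 (X w)) z) = 0 := by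
    rw [hW]
    apply mul_left_cancel₀ hsnC
    simp only [cdot3, Fin.sum_univ_three, Pi.smul_apply, smul_eq_mul, toC3, spinV,
      Matrix.cons_val_zero, Matrix.cons_val_one, Matrix.head_cons, Matrix.cons_val_two,
      Matrix.tail_cons, mul_zero]
    linear_combination (E * (x0 ^ 2 - x1 ^ 2)) * hN0s + (E * Complex.I * (x0 ^ 2 + x1 ^ 2)) * hN1s +
      (E * (-2 * x0 * x1)) * hN2s +
      (-(E * (x0 ^ 2 + x1 ^ 2) * ((starRingEnd ℂ) x0 * x1 - x0 * (starRingEnd ℂ) x1))) *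
        Complex.I_sq
  -- (iii) second part
  have hiii2 : rnorm3 (spinN (ξ z)) = 1 := by
    have key : ((starRingEnd ℂ) x0 * x1).re ^ 2 + ((starRingEnd ℂ) x0 * x1).im ^ 2 =
        Complex.normSq x0 * Complex.normSq x1 := by
      have h1 : Complex.normSq ((starRingEnd ℂ) x0 * x1) = Complex.normSq x0 * Complex.normSq x1 := by
        rw [Complex.normSq_mul, Complex.normSq_conj]
      rw [← h1, Complex.normSq_apply]; ring
    have hsum : (∑ i, (spinN (ξ z) i) ^ 2) = 1 := by
      simp only [spinN, Fin.sum_univ_three, Pi.smul_apply, smul_eq_mul, Matrix.cons_val_zero,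
        Matrix.cons_val_one, Matrix.head_cons, Matrix.cons_val_two, Matrix.tail_cons]
      have hsne := hs.ne'
      rw [spinSq] at hsne ⊢
      simp only [Complex.normSq_apply, Complex.mul_re, Complex.mul_im, Complex.conj_re,
        Complex.conj_im] at hsne ⊢
      field_simp
      rw [div_eq_one_iff_eq (by convert pow_ne_zero 2 hsne using 1; ring)]
      ring
    rw [rnorm3, hsum, Real.sqrt_one]
  refine ⟨hi, ⟨hii, hpos⟩, ⟨hiii1, hiii2⟩, ?_⟩
  -- (iv)
  have hGN := heq z hz
  rw [grossNeveuEq] at hGN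
  have h0 := congrFun hGN 0
  have h1 := congrFun hGN 1
  rw [wirtb_apply' ξ z hξd 0] at h0
  rw [wirtb_apply' ξ z hξd 1] at h1
  simp only [Pi.add_apply, Pi.smul_apply, smul_eq_mul, sigma2, Matrix.mulVec,
    dotProduct, Fin.sum_univ_two, Matrix.cons_val', Matrix.cons_val_zero,
    Matrix.cons_val_one, Matrix.head_cons, Matrix.empty_val', Matrix.cons_val_fin_one,
    Matrix.head_fin_const, Matrix.of_apply] at h0 h1
  have hw0 : wirtb (fun w => ξ w 0) z =
      2⁻¹ * H * x0 + (β : ℂ) * (starRingEnd ℂ) E * ((spinSq (ξ z) : ℝ) : ℂ) *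
        (starRingEnd ℂ) x1 := by
    linear_combination h0 -
      ((β : ℂ) * (starRingEnd ℂ) E * ((spinSq (ξ z) : ℝ) : ℂ) * (starRingEnd ℂ) x1) *
        Complex.I_sq
  have hw1 : wirtb (fun w => ξ w 1) z =
      2⁻¹ * H * x1 - (β : ℂ) * (starRingEnd ℂ) E * ((spinSq (ξ z) : ℝ) : ℂ) *
        (starRingEnd ℂ) x0 := by
    linear_combination h1 +
      ((β : ℂ) * (starRingEnd ℂ) E * ((spinSq (ξ z) : ℝ) : ℂ) * (starRingEnd ℂ) x0) *
        Complex.I_sq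
  have hwe : wirtb e z = -(H * E) := by linear_combination htor z hz
  have hEqF : (fun w => wirt (fun u => toC3 (X u)) w) =ᶠ[nhds z] (fun w => e w • spinV (ξ w)) :=
    Filter.eventuallyEq_of_mem hmem hdX
  rw [wirtb_congr hEqF, hii]
  have hprodd : DifferentiableAt ℝ (fun w => e w • spinV (ξ w)) z := by
    apply differentiableAt_pi.2
    intro A
    fin_cases A <;>
      simp only [Pi.smul_apply, smul_eq_mul, spinV, Matrix.cons_val_zero, Matrix.cons_val_one,
        Matrix.head_cons, Matrix.cons_val_two, Matrix.tail_cons]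
    · exact hed.mul ((hx0.pow 2).sub (hx1.pow 2))
    · exact hed.mul (((hx0.pow 2).add (hx1.pow 2)).const_mul Complex.I)
    · exact hed.mul ((hx0.const_mul (-2)).mul hx1)
  have hc0 : wirtb (fun w => e w • spinV (ξ w)) z 0 =
      ((((β : ℝ) : ℂ) * ((2 * Complex.normSq (e z) * spinSq (ξ z) ^ 2 : ℝ) : ℂ)) •
        toC3 (spinN (ξ z))) 0 := by
    rw [wirtb_apply' _ _ hprodd 0]
    have hfun : (fun w => (e w • spinV (ξ w)) 0) =
        fun w => e w * (ξ w 0 * ξ w 0) - e w * (ξ w 1 * ξ w 1) := by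
      funext w
      simp only [Pi.smul_apply, smul_eq_mul, spinV, Matrix.cons_val_zero]
      ring
    rw [hfun, wirtb_sub (fun w => e w * (ξ w 0 * ξ w 0)) (fun w => e w * (ξ w 1 * ξ w 1)) z (hed.mul (hx0.mul hx0)) (hed.mul (hx1.mul hx1)),
      wirtb_emul2 e _ _ z hed hx0 hx0, wirtb_emul2 e _ _ z hed hx1 hx1, hw0, hw1, hwe]
    simp only [Pi.smul_apply, smul_eq_mul, toC3]
    push_cast
    rw [Complex.normSq_eq_conj_mul_self]
    linear_combination (-((β : ℂ) * 2 * ((starRingEnd ℂ) E * E) * ((spinSq (ξ z) : ℝ) : ℂ))) * hN0s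
  have hc1 : wirtb (fun w => e w • spinV (ξ w)) z 1 =
      ((((β : ℝ) : ℂ) * ((2 * Complex.normSq (e z) * spinSq (ξ z) ^ 2 : ℝ) : ℂ)) •
        toC3 (spinN (ξ z))) 1 := by
    rw [wirtb_apply' _ _ hprodd 1]
    have hfun : (fun w => (e w • spinV (ξ w)) 1) =
        fun w => Complex.I * (e w * (ξ w 0 * ξ w 0)) + Complex.I * (e w * (ξ w 1 * ξ w 1)) := by
      funext w
      simp only [Pi.smul_apply, smul_eq_mul, spinV, Matrix.cons_val_one, Matrix.head_cons,
        Matrix.cons_val_zero]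
      ring
    rw [hfun, wirtb_add (fun w => Complex.I * (e w * (ξ w 0 * ξ w 0)))
          (fun w => Complex.I * (e w * (ξ w 1 * ξ w 1))) z ((hed.mul (hx0.mul hx0)).const_mul Complex.I)
        ((hed.mul (hx1.mul hx1)).const_mul Complex.I),
      wirtb_const_mul Complex.I (fun w => e w * (ξ w 0 * ξ w 0)) z (hed.mul (hx0.mul hx0)),
      wirtb_const_mul Complex.I (fun w => e w * (ξ w 1 * ξ w 1)) z (hed.mul (hx1.mul hx1)),
      wirtb_emul2 e _ _ z hed hx0 hx0, wirtb_emul2 e _ _ z hed hx1 hx1, hw0, hw1, hwe]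
    simp only [Pi.smul_apply, smul_eq_mul, toC3]
    push_cast
    rw [Complex.normSq_eq_conj_mul_self]
    linear_combination (-((β : ℂ) * 2 * ((starRingEnd ℂ) E * E) * ((spinSq (ξ z) : ℝ) : ℂ))) * hN1s
  have hc2 : wirtb (fun w => e w • spinV (ξ w)) z 2 =
      ((((β : ℝ) : ℂ) * ((2 * Complex.normSq (e z) * spinSq (ξ z) ^ 2 : ℝ) : ℂ)) •
        toC3 (spinN (ξ z))) 2 := by
    rw [wirtb_apply' _ _ hprodd 2]
    have hfun : (fun w => (e w • spinV (ξ w)) 2) =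
        fun w => (-2) * (e w * (ξ w 0 * ξ w 1)) := by
      funext w
      simp only [Pi.smul_apply, smul_eq_mul, spinV, Matrix.cons_val_two, Matrix.tail_cons,
        Matrix.head_cons]
      ring
    rw [hfun, wirtb_const_mul (-2) (fun w => e w * (ξ w 0 * ξ w 1)) z (hed.mul (hx0.mul hx1)),
      wirtb_emul2 e _ _ z hed hx0 hx1, hw0, hw1, hwe]
    simp only [Pi.smul_apply, smul_eq_mul, toC3]
    push_cast
    rw [Complex.normSq_eq_conj_mul_self]
    linear_combination (-((β : ℂ) * 2 * ((starRingEnd ℂ) E * E) * ((spinSq (ξ z) : ℝ) : ℂ))) * hN2s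
  funext A
  fin_cases A
  · exact hc0
  · exact hc1
  · exact hc2
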